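/- (Convergence of eigencouples under G-convergence) Let λ > 0, let A_h be a sequence in P_λ(Y) G-converging to A ∈ P_λ(Y), and let {μ_h, u_h} ∈ ℝ × Y solve the eigenvalue problem A_h u_h = μ_h u_h. If {μ_h, u_h} → {μ, u} in ℝ × Y, then the limit couple {μ, u} solves the eigenvalue problem A u = μ u. -/

import Mathlib

open Filter Topology
open scoped InnerProductSpace RealInnerProductSpace ENNReal

noncomputable section

variable (Y : Type*) [NormedAddCommGroup Y] [InnerProductSpace ℝ Y] [CompleteSpace Y]

/-- The class `P_lam(Y)`: self-adjoint operators `A` defined on a linear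
subspace of `Y`, regarded as operators on the closed subspace
`V = closure(D(A))`, satisfying `⟨Au, u⟩ ≥ lam ‖u‖²` on `D(A)`.
Self-adjointness of the symmetric semibounded operator is encoded by
surjectivity of `A + μI : D(A) → V` for every `μ > 0`. -/
structure POp (lam : ℝ) where
  dom : Submodule ℝ Y
  op : dom →ₗ[ℝ] Y
  mem_closure : ∀ u : dom, op u ∈ dom.topologicalClosure
  symmetric : ∀ u v : dom, ⟪op u, (v : Y)⟫ = ⟪(u : Y), op v⟫
  coercive : ∀ u : dom, lam * ‖(u : Y)‖ ^ 2 ≤ ⟪op u, (u : Y)⟫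
  selfadj : ∀ μ : ℝ, 0 < μ → ∀ v ∈ dom.topologicalClosure,
    ∃ u : dom, op u + μ • (u : Y) = v

variable {Y}

/-- The orthogonal projection of `Y` onto the closure of a subspace. -/
def projClosure (K : Submodule ℝ Y) (u : Y) : Y :=
  haveI : CompleteSpace K.topologicalClosure :=
    K.isClosed_topologicalClosure.completeSpace_coe
  (K.topologicalClosure.orthogonalProjection u : Y)

/-- `x` solves `(A + μ I) x = P u`, where `P` is the orthogonal projection onto
the closure of the domain of `A`. -/
def SolvesShifted {lam : ℝ} (A : POp Y lam) (μ : ℝ) (x : Y) (u : Y) : Prop :=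
  ∃ hx : x ∈ A.dom, A.op ⟨x, hx⟩ + μ • x = projClosure A.dom u

/-- G-convergence of `(A_h + μI)` to `(A + μI)`: for every `u ∈ Y`,
`(A_h + μ)⁻¹ P_h u → (A + μ)⁻¹ P u` in `Y` (the inverses applied to the
projections, expressed through the — unique — solutions of the corresponding
equations). With `μ = 0` this is the G-convergence `A_h → A` of Definition 4,
and quantifying over all `μ > 0` gives strong resolvent convergence. -/
def GConvShift {lam : ℝ} (μ : ℝ) (A : ℕ → POp Y lam) (B : POp Y lam) : Prop :=
  ∀ u : Y, ∀ x : ℕ → Y, ∀ y : Y,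
    (∀ h, SolvesShifted (A h) μ (x h) u) → SolvesShifted B μ y u →
      Tendsto x atTop (𝓝 y)

/-- G-convergence `A_h → A` in `P_lam(Y)`, `lam > 0`. -/
def GConvOp {lam : ℝ} (A : ℕ → POp Y lam) (B : POp Y lam) : Prop :=
  GConvShift 0 A B

/-- Convergence in the strong resolvent sense for operators of class `P₀(Y)`. -/
def SRSConv (A : ℕ → POp Y 0) (B : POp Y 0) : Prop :=
  ∀ μ : ℝ, 0 < μ → GConvShift μ A B

/-! Let `x_h := A_h⁻¹ P_h (μ u)` and `y := A⁻¹ P (μ u)`; G-convergence gives `x_h → y`.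
Since `u_h ∈ D(A_h)`, the projection `P_h` fixes `μ_h u_h`, so `A_h (u_h - x_h) = P_h (μ_h u_h - μ u)`
and coercivity yields `lam ‖u_h - x_h‖ ≤ ‖μ_h u_h - μ u‖ → 0`. Hence `x_h → u`, so `y = u`, and
`A u = P (μ u) = μ u` because `u ∈ D(A)`. -/

theorem mul_norm_le_norm_of_mul_sq_le_inner {E : Type*} [NormedAddCommGroup E]
    [InnerProductSpace ℝ E] {a : ℝ} {x y : E} (h : a * ‖x‖ ^ 2 ≤ ⟪y, x⟫) :
    a * ‖x‖ ≤ ‖y‖ := by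
  rcases (norm_nonneg x).eq_or_lt with hx | hx
  · simp [← hx]
  · have := real_inner_le_norm y x
    exact le_of_mul_le_mul_right (by nlinarith) hx

theorem projClosure_eq_starProjection (K : Submodule ℝ Y) (u : Y) :
    projClosure K u = K.topologicalClosure.starProjection u :=
  rfl

theorem projClosure_mem (K : Submodule ℝ Y) (u : Y) :
    projClosure K u ∈ K.topologicalClosure :=
  SetLike.coe_mem _

theorem projClosure_eq_self {K : Submodule ℝ Y} {u : Y} (hu : u ∈ K) :
    projClosure K u = u :=
  Submodule.starProjection_eq_self_iff.2 (K.le_topologicalClosure hu)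

theorem projClosure_sub (K : Submodule ℝ Y) (u v : Y) :
    projClosure K (u - v) = projClosure K u - projClosure K v := by
  simp only [projClosure_eq_starProjection, map_sub]

theorem norm_projClosure_le (K : Submodule ℝ Y) (u : Y) : ‖projClosure K u‖ ≤ ‖u‖ :=
  K.topologicalClosure.norm_starProjection_apply_le u

namespace POp

theorem mul_norm_le_norm_op_add_smul {E : Type*} [NormedAddCommGroup E] [InnerProductSpace ℝ E]
    {lam : ℝ} (A : POp E lam) (c : ℝ) (d : A.dom) :
    (lam + c) * ‖(d : E)‖ ≤ ‖A.op d + c • (d : E)‖ := by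
  refine mul_norm_le_norm_of_mul_sq_le_inner ?_
  rw [inner_add_left, real_inner_smul_left, real_inner_self_eq_norm_sq]
  linarith [A.coercive d]

variable {lam : ℝ} (A : POp Y lam)

theorem mul_norm_sub_le_of_solvesShifted {c : ℝ} {x x' f f' : Y}
    (hx : SolvesShifted A c x f) (hx' : SolvesShifted A c x' f') :
    (lam + c) * ‖x - x'‖ ≤ ‖f - f'‖ := by
  obtain ⟨hxA, hxf⟩ := hx
  obtain ⟨hxA', hxf'⟩ := hx'
  calc (lam + c) * ‖x - x'‖ ≤ ‖A.op (⟨x, hxA⟩ - ⟨x', hxA'⟩) + c • (x - x')‖ :=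
        A.mul_norm_le_norm_op_add_smul c (⟨x, hxA⟩ - ⟨x', hxA'⟩)
    _ = ‖projClosure A.dom (f - f')‖ := by
        rw [map_sub, projClosure_sub, ← hxf, ← hxf', smul_sub, add_sub_add_comm]
    _ ≤ ‖f - f'‖ := norm_projClosure_le _ _

/-- `A` is onto the closure of its domain: the solution of `A x = v` is the fixed point of
the contraction `w ↦ (A + I)⁻¹ (v + w)`, of constant `1 / (lam + 1)`. -/
theorem exists_op_eq (hlam : 0 < lam) {v : Y} (hv : v ∈ A.dom.topologicalClosure) :
    ∃ x : A.dom, A.op x = v := by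
  set V := A.dom.topologicalClosure
  choose g hg using fun w : V => A.selfadj 1 one_pos _ (V.add_mem hv w.2)
  let T : V → V := fun w => ⟨g w, A.dom.le_topologicalClosure (g w).2⟩
  have hT : ContractingWith ⟨1 / (lam + 1), by positivity⟩ T := by
    refine ⟨NNReal.coe_lt_one.1 ?_, LipschitzWith.of_dist_le_mul fun w₁ w₂ => ?_⟩
    · show 1 / (lam + 1) < 1
      rw [div_lt_one (by linarith)]
      linarith
    · have h := A.mul_norm_le_norm_op_add_smul 1 (g w₁ - g w₂)
      rw [map_sub, Submodule.coe_sub, smul_sub, ← add_sub_add_comm, hg, hg,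
        add_sub_add_left_eq_sub] at h
      rw [Subtype.dist_eq, Subtype.dist_eq, dist_eq_norm, dist_eq_norm]
      show ‖(g w₁ : Y) - g w₂‖ ≤ 1 / (lam + 1) * ‖(w₁ : Y) - w₂‖
      rw [div_mul_eq_mul_div, one_mul, le_div_iff₀ (by linarith), mul_comm]
      exact h
  have : Nonempty V := ⟨0⟩
  set w := ContractingWith.fixedPoint T hT
  have hfix : (g w : Y) = w := congrArg Subtype.val hT.fixedPoint_isFixedPt
  have hw := hg w
  rw [one_smul, hfix] at hw
  exact ⟨g w, add_right_cancel hw⟩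

theorem exists_solvesShifted_zero (hlam : 0 < lam) (f : Y) : ∃ x, SolvesShifted A 0 x f := by
  obtain ⟨x, hx⟩ := A.exists_op_eq hlam (projClosure_mem A.dom f)
  exact ⟨x, x.2, by simpa using hx⟩

theorem solvesShifted_zero_smul_self_iff {μ : ℝ} {x : Y} :
    SolvesShifted A 0 x (μ • x) ↔ ∃ hx : x ∈ A.dom, A.op ⟨x, hx⟩ = μ • x := by
  refine exists_congr fun hx => ?_
  rw [zero_smul, add_zero, projClosure_eq_self (A.dom.smul_mem μ hx)]

end POp

/-- **Convergence of eigencouples under G-convergence** (Theorem 7): if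
`lam > 0`, `A_h ∈ P_lam(Y)` G-converges to `A ∈ P_lam(Y)`, `{μ_h, u_h}` solve
the eigenvalue problems `A_h u_h = μ_h u_h`, and `{μ_h, u_h} → {μ, u}` in
`ℝ × Y`, then `A u = μ u`. -/
theorem eigencouple_convergence {Y : Type*} [NormedAddCommGroup Y]
    [InnerProductSpace ℝ Y] [CompleteSpace Y]
    (lam : ℝ) (hlam : 0 < lam) (A : ℕ → POp Y lam) (B : POp Y lam)
    (hG : GConvOp A B)
    (μs : ℕ → ℝ) (us : ℕ → Y)
    (heig : ∀ h, ∃ hu : us h ∈ (A h).dom, (A h).op ⟨us h, hu⟩ = μs h • us h)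
    (μ : ℝ) (u : Y)
    (hμ : Tendsto μs atTop (𝓝 μ)) (hu : Tendsto us atTop (𝓝 u)) :
    ∃ hmem : u ∈ B.dom, B.op ⟨u, hmem⟩ = μ • u := by
  choose x hx using fun h => (A h).exists_solvesShifted_zero hlam (μ • u)
  obtain ⟨y, hy⟩ := B.exists_solvesShifted_zero hlam (μ • u)
  have hxy : Tendsto x atTop (𝓝 y) := hG _ _ _ hx hy
  have hdist : ∀ h, dist (us h) (x h) ≤ ‖μs h • us h - μ • u‖ / lam := fun h => by
    rw [dist_eq_norm, le_div_iff₀ hlam, mul_comm]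
    simpa using (A h).mul_norm_sub_le_of_solvesShifted
      ((A h).solvesShifted_zero_smul_self_iff.2 (heig h)) (hx h)
  have hbound : Tendsto (fun h => ‖μs h • us h - μ • u‖ / lam) atTop (𝓝 0) := by
    simpa using ((hμ.smul hu).sub_const (μ • u)).norm.div_const lam
  have hxu : Tendsto x atTop (𝓝 u) :=
    hu.congr_dist (squeeze_zero (fun _ => dist_nonneg) hdist hbound)
  obtain rfl := tendsto_nhds_unique hxy hxu
  exact B.solvesShifted_zero_smul_self_iff.1 hy

end
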